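/- Let Γ be a real n×n matrix whose symmetric part is positive definite. Then Γ is invertible, the function s ↦ exp(−sΓ) (matrix exponential) is Bochner integrable on [0, ∞), and ∫₀^∞ exp(−sΓ) ds = Γ⁻¹. -/

import Mathlib

/-! By compactness of the unit sphere, `v ⬝ᵥ Γ *ᵥ v ≥ c |v|²` for some `c > 0`. Along
`w s = exp (-s Γ) v` this gives `(|w|²)' = -2 w ⬝ᵥ Γ *ᵥ w ≤ -2c |w|²`, so `|w s| ≤ e^{-cs} |v|`
and every entry of `exp (-s Γ)` is bounded by `e^{-cs}`, which gives integrability. Finally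
`-Γ⁻¹ exp (-s Γ)` is an antiderivative of `exp (-s Γ)` that vanishes at infinity, so the integral
is `Γ⁻¹`. -/

open Matrix MeasureTheory Filter Topology Set

theorem exists_pos_mul_norm_sq_le_of_homogeneous {E : Type*} [NormedAddCommGroup E]
    [NormedSpace ℝ E] [ProperSpace E] {q : E → ℝ} (hq : Continuous q)
    (hsmul : ∀ (t : ℝ) (v : E), q (t • v) = t ^ 2 * q v) (hpos : ∀ v ≠ 0, 0 < q v) :
    ∃ c > 0, ∀ v, c * ‖v‖ ^ 2 ≤ q v := by
  have hq0 : q 0 = 0 := by simpa using hsmul 0 0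
  rcases subsingleton_or_nontrivial E with hE | hE
  · exact ⟨1, one_pos, fun v => by simp [Subsingleton.elim v 0, hq0]⟩
  obtain ⟨u, hu, hmin⟩ := (isCompact_sphere (0 : E) 1).exists_isMinOn
    (NormedSpace.sphere_nonempty.mpr zero_le_one) hq.continuousOn
  have hu0 : u ≠ 0 := ne_zero_of_mem_unit_sphere ⟨u, hu⟩
  refine ⟨q u, hpos u hu0, fun v => ?_⟩
  rcases eq_or_ne v 0 with rfl | hv
  · simp [hq0]
  have hv' : 0 < ‖v‖ := norm_pos_iff.mpr hv
  have hunit : ‖v‖⁻¹ • v ∈ Metric.sphere (0 : E) 1 := by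
    simp [norm_smul, hv'.ne']
  calc q u * ‖v‖ ^ 2 ≤ q (‖v‖⁻¹ • v) * ‖v‖ ^ 2 := by gcongr; exact hmin hunit
    _ = q v := by rw [hsmul]; field_simp

theorem Matrix.exists_pos_mul_dotProduct_self_le {m : Type*} [Fintype m] {A : Matrix m m ℝ}
    (hA : ∀ v ≠ 0, 0 < v ⬝ᵥ A *ᵥ v) : ∃ c > 0, ∀ v, c * (v ⬝ᵥ v) ≤ v ⬝ᵥ A *ᵥ v := by
  obtain ⟨c, hc, hle⟩ := exists_pos_mul_norm_sq_le_of_homogeneous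
    (E := EuclideanSpace ℝ m) (q := fun x => x.ofLp ⬝ᵥ A *ᵥ x.ofLp)
    (by fun_prop) (fun t v => by simp [mulVec_smul, smul_dotProduct, dotProduct_smul]; ring)
    (fun v hv => hA v.ofLp (by simpa using hv))
  refine ⟨c, hc, fun v => ?_⟩
  have := hle (WithLp.toLp 2 v)
  rw [EuclideanSpace.norm_sq_eq] at this
  simpa [dotProduct, sq] using this

theorem HasDerivAt.dotProduct {m : Type*} [Fintype m] {f g : ℝ → m → ℝ} {f' g' : m → ℝ} {x : ℝ}
    (hf : HasDerivAt f f' x) (hg : HasDerivAt g g' x) :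
    HasDerivAt (fun t => f t ⬝ᵥ g t) (f' ⬝ᵥ g x + f x ⬝ᵥ g') x := by
  have := HasDerivAt.fun_sum (u := Finset.univ)
    fun i _ => (hasDerivAt_pi.mp hf i).mul (hasDerivAt_pi.mp hg i)
  simp only [Finset.sum_add_distrib] at this
  exact this

theorem le_exp_mul_mul_of_hasDerivAt_le {g g' : ℝ → ℝ} {k : ℝ}
    (hg : ∀ t, HasDerivAt g (g' t) t) (hle : ∀ t, g' t ≤ k * g t) {t : ℝ} (ht : 0 ≤ t) :
    g t ≤ Real.exp (k * t) * g 0 := by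
  have hdecr : Antitone fun s => Real.exp (-(k * s)) * g s := by
    have hderiv : ∀ s, HasDerivAt (fun s => Real.exp (-(k * s)) * g s)
        (Real.exp (-(k * s)) * (g' s - k * g s)) s := fun s =>
      (((hasDerivAt_id' s).const_mul k).neg.exp.mul (hg s)).congr_deriv
        (by simp only [Pi.neg_apply]; ring)
    refine antitone_of_deriv_nonpos (fun s => (hderiv s).differentiableAt) fun s => ?_
    rw [(hderiv s).deriv]
    exact mul_nonpos_of_nonneg_of_nonpos (Real.exp_pos _).le (by linarith [hle s])
  have := hdecr ht
  simp only [mul_zero, neg_zero, Real.exp_zero, one_mul, Real.exp_neg] at this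
  rwa [inv_mul_le_iff₀ (Real.exp_pos _)] at this

theorem HasDerivAt.mulVec_const {m n : Type*} [Fintype n] {f : ℝ → Matrix m n ℝ}
    {f' : Matrix m n ℝ} {x : ℝ} (hf : HasDerivAt f f' x) (v : n → ℝ) :
    HasDerivAt (fun t => f t *ᵥ v) (f' *ᵥ v) x :=
  hasDerivAt_pi.2 fun i => HasDerivAt.fun_sum fun j _ =>
    (hasDerivAt_pi.1 (hasDerivAt_pi.1 hf i) j).mul_const (v j)

namespace Matrix

theorem sq_apply_le_dotProduct_mulVec_single {m n : Type*} [Fintype m] [Fintype n] [DecidableEq n]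
    (M : Matrix m n ℝ) (i : m) (j : n) :
    M i j ^ 2 ≤ (M *ᵥ Pi.single j 1) ⬝ᵥ (M *ᵥ Pi.single j 1) := by
  rw [mulVec_single_one, dotProduct, sq]
  exact Finset.single_le_sum (f := fun k => M.col j k * M.col j k)
    (fun k _ => mul_self_nonneg _) (Finset.mem_univ i)

variable {m : Type*} [Fintype m] [DecidableEq m]

theorem isUnit_det_of_forall_pos_dotProduct_mulVec {A : Matrix m m ℝ}
    (hA : ∀ v ≠ 0, 0 < v ⬝ᵥ A *ᵥ v) : IsUnit A.det := by
  rw [isUnit_iff_ne_zero, Ne, ← exists_mulVec_eq_zero_iff]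
  rintro ⟨v, hv, hAv⟩
  simpa [hAv] using hA v hv

section

-- `HasDerivAt` only sees the topology, so any normed-algebra structure on matrices will do here.
attribute [local instance] Matrix.linftyOpNormedRing Matrix.linftyOpNormedAlgebra

theorem hasDerivAt_exp_neg_smul (A : Matrix m m ℝ) (t : ℝ) :
    HasDerivAt (fun s : ℝ => NormedSpace.exp (-(s • A))) (-(A * NormedSpace.exp (-(t • A)))) t := by
  have h := hasDerivAt_exp_smul_const' (-A) t
  simp only [smul_neg, neg_mul] at h
  exact h

theorem hasDerivAt_neg_inv_mul_exp_neg_smul {A : Matrix m m ℝ} (hA : IsUnit A.det) (t : ℝ) :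
    HasDerivAt (fun s : ℝ => -(A⁻¹ * NormedSpace.exp (-(s • A)))) (NormedSpace.exp (-(t • A))) t := by
  have h := ((hasDerivAt_exp_neg_smul A t).const_mul A⁻¹).neg
  simp only [mul_neg, neg_neg, ← Matrix.mul_assoc, nonsing_inv_mul A hA, Matrix.one_mul] at h
  exact h

end

end Matrix

attribute [local instance] Matrix.normedAddCommGroup Matrix.normedSpace

namespace Matrix

variable {m : Type*} [Fintype m] [DecidableEq m] {A : Matrix m m ℝ} {c : ℝ}

theorem dotProduct_self_exp_neg_smul_mulVec_le (hA : ∀ v, c * (v ⬝ᵥ v) ≤ v ⬝ᵥ A *ᵥ v)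
    (v : m → ℝ) {t : ℝ} (ht : 0 ≤ t) :
    (NormedSpace.exp (-(t • A)) *ᵥ v) ⬝ᵥ (NormedSpace.exp (-(t • A)) *ᵥ v) ≤
      Real.exp (-(2 * c) * t) * (v ⬝ᵥ v) := by
  set w : ℝ → m → ℝ := fun s => NormedSpace.exp (-(s • A)) *ᵥ v
  have hw : ∀ s, HasDerivAt w (-(A *ᵥ w s)) s := fun s => by
    have h := (hasDerivAt_exp_neg_smul A s).mulVec_const v
    rwa [neg_mulVec, ← mulVec_mulVec] at h
  have hw0 : w 0 = v := by simp [w]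
  have hdecay : ∀ s, -(A *ᵥ w s) ⬝ᵥ w s + w s ⬝ᵥ -(A *ᵥ w s) ≤ -(2 * c) * (w s ⬝ᵥ w s) :=
    fun s => by
      rw [dotProduct_comm (-(A *ᵥ w s)), dotProduct_neg]
      linarith [hA (w s)]
  calc w t ⬝ᵥ w t ≤ Real.exp (-(2 * c) * t) * (w 0 ⬝ᵥ w 0) :=
        le_exp_mul_mul_of_hasDerivAt_le (fun s => (hw s).dotProduct (hw s)) hdecay ht
    _ = Real.exp (-(2 * c) * t) * (v ⬝ᵥ v) := by rw [hw0]

theorem norm_exp_neg_smul_le (hA : ∀ v, c * (v ⬝ᵥ v) ≤ v ⬝ᵥ A *ᵥ v) {t : ℝ} (ht : 0 ≤ t) :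
    ‖NormedSpace.exp (-(t • A))‖ ≤ Real.exp (-(c * t)) := by
  refine (norm_le_iff (Real.exp_pos _).le).2 fun i j => abs_le_of_sq_le_sq ?_ (Real.exp_pos _).le
  calc NormedSpace.exp (-(t • A)) i j ^ 2
      ≤ Real.exp (-(2 * c) * t) * (Pi.single j 1 ⬝ᵥ Pi.single j 1) :=
        (sq_apply_le_dotProduct_mulVec_single _ i j).trans
          (dotProduct_self_exp_neg_smul_mulVec_le hA _ ht)
    _ = Real.exp (-(c * t)) ^ 2 := by
        rw [single_dotProduct, Pi.single_eq_same, mul_one, sq, ← Real.exp_add]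
        ring_nf

theorem continuous_exp_neg_smul (A : Matrix m m ℝ) :
    Continuous fun s : ℝ => NormedSpace.exp (-(s • A)) :=
  continuous_iff_continuousAt.2 fun s => (hasDerivAt_exp_neg_smul A s).continuousAt

theorem tendsto_exp_neg_smul_atTop (hc : 0 < c) (hA : ∀ v, c * (v ⬝ᵥ v) ≤ v ⬝ᵥ A *ᵥ v) :
    Tendsto (fun s : ℝ => NormedSpace.exp (-(s • A))) atTop (𝓝 0) :=
  squeeze_zero_norm' ((eventually_ge_atTop 0).mono fun _ => norm_exp_neg_smul_le hA)
    (Real.tendsto_exp_neg_atTop_nhds_zero.comp (tendsto_id.const_mul_atTop hc))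

theorem integrableOn_exp_neg_smul (hc : 0 < c) (hA : ∀ v, c * (v ⬝ᵥ v) ≤ v ⬝ᵥ A *ᵥ v) :
    @IntegrableOn _ _ _ _ SeminormedAddGroup.toContinuousENorm
      (fun s : ℝ => NormedSpace.exp (-(s • A))) (Ici 0) volume := by
  have hexp : IntegrableOn (fun s : ℝ => Real.exp (-(c * s))) (Ici 0) := by
    rw [integrableOn_Ici_iff_integrableOn_Ioi]
    simpa only [neg_mul] using exp_neg_integrableOn_Ioi 0 hc
  -- not found by instance search: the sup-norm topology is not syntactically the `Matrix` one
  have : TopologicalSpace.PseudoMetrizableSpace (Matrix m m ℝ) :=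
    PseudoEMetricSpace.pseudoMetrizableSpace
  refine hexp.mono' (continuous_exp_neg_smul A).aestronglyMeasurable.restrict ?_
  exact (ae_restrict_iff' measurableSet_Ici).2 (.of_forall fun _ => norm_exp_neg_smul_le hA)

theorem integral_exp_neg_smul (hc : 0 < c) (hA : ∀ v, c * (v ⬝ᵥ v) ≤ v ⬝ᵥ A *ᵥ v)
    (hdet : IsUnit A.det) : ∫ s in Ici (0 : ℝ), NormedSpace.exp (-(s • A)) = A⁻¹ := by
  have hlim : Tendsto (fun s : ℝ => -(A⁻¹ * NormedSpace.exp (-(s • A)))) atTop (𝓝 0) := by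
    simpa using ((tendsto_exp_neg_smul_atTop hc hA).const_mul A⁻¹).neg
  rw [integral_Ici_eq_integral_Ioi, integral_Ioi_of_hasDerivAt_of_tendsto'
    (fun s _ => hasDerivAt_neg_inv_mul_exp_neg_smul hdet s)
    ((integrableOn_exp_neg_smul hc hA).mono_set Ioi_subset_Ici_self) hlim]
  simp

end Matrix

/-- If the real `n × n` matrix `Γ` has positive-definite symmetric part,
then `Γ` is invertible, `s ↦ exp (-s Γ)` is Bochner integrable on `[0, ∞)`, and
`∫₀^∞ exp (-s Γ) ds = Γ⁻¹`. -/
theorem stmt_3 (n : ℕ) (Γ : Matrix (Fin n) (Fin n) ℝ)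
    (hΓ : ∀ v : Fin n → ℝ, v ≠ 0 → 0 < v ⬝ᵥ Γ.mulVec v) :
    IsUnit Γ.det ∧
    @IntegrableOn _ _ _ _ SeminormedAddGroup.toContinuousENorm (fun s : ℝ => NormedSpace.exp (-(s • Γ))) (Set.Ici 0) volume ∧
    ∫ s in Set.Ici (0 : ℝ), NormedSpace.exp (-(s • Γ)) = Γ⁻¹ := by
  have hdet := isUnit_det_of_forall_pos_dotProduct_mulVec hΓ
  obtain ⟨c, hc, hcoercive⟩ := exists_pos_mul_dotProduct_self_le hΓ
  exact ⟨hdet, integrableOn_exp_neg_smul hc hcoercive, integral_exp_neg_smul hc hcoercive hdet⟩
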